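/- Let 𝒜 ⊂ ℝ² and η : 𝒜 → ℝ be a C¹ function, and for (x₁,x₂) ∈ 𝒜 let n(x₁,x₂) = (∂₁η(x₁,x₂), ∂₂η(x₁,x₂), −1)/√(1 + |∇η(x₁,x₂)|²) be the unit normal to the graph of η. Then for any two points c, y ∈ 𝒜 and any v ∈ ℝ³ with v ≠ 0 and n(y)·v = 0, one has |n(c)·(v/|v|)| ≤ 2 |∇η(c) − ∇η(y)|. -/

import Mathlib

/-!
Statement 17: if `n` is the unit normal of the graph of a `C¹` function `η` and
`v ≠ 0` is tangent at a point `y` (i.e. `n(y)·v = 0`), then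
`|n(c)·(v/|v|)| ≤ 2 |∇η(c) − ∇η(y)|`.
-/

open scoped RealInnerProductSpace

noncomputable section

abbrev R2 := EuclideanSpace ℝ (Fin 2)
abbrev R3 := EuclideanSpace ℝ (Fin 3)

/-- The (non-normalized direction followed by normalization) unit normal
`(∂₁η, ∂₂η, −1)/√(1+|∇η|²)` of the graph of `η`, expressed in terms of the
gradient vector `g = ∇η`. -/
def normalOf (g : R2) : R3 :=
  (Real.sqrt (1 + ‖g‖ ^ 2))⁻¹ • (WithLp.equiv 2 (Fin 3 → ℝ)).symm ![g 0, g 1, -1]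

/-!
The unit normal is the normalization of `N(g) = (g₀, g₁, -1)`, and `N` is an isometry onto an affine
plane at distance `1` from the origin. Normalization is `2`-Lipschitz outside the unit ball, so
`‖n(c) - n(y)‖ ≤ 2 ‖∇η(c) - ∇η(y)‖`. Since `v / ‖v‖` is a unit vector orthogonal to `n(y)`,
`⟪n(c), v / ‖v‖⟫ = ⟪n(c) - n(y), v / ‖v‖⟫`, which Cauchy–Schwarz bounds by `‖n(c) - n(y)‖`.
-/

namespace NormedSpace

variable {V : Type*} [NormedAddCommGroup V] [NormedSpace ℝ V]

lemma norm_normalize_le (x : V) : ‖normalize x‖ ≤ 1 := by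
  rcases eq_or_ne x 0 with rfl | hx
  · simp
  · exact (norm_normalize_eq_one_iff.mpr hx).le

lemma norm_mul_norm_normalize_sub_le (x y : V) :
    ‖x‖ * ‖normalize x - normalize y‖ ≤ 2 * ‖x - y‖ := by
  have hsplit : ‖x‖ • (normalize x - normalize y) = (x - y) + (‖y‖ - ‖x‖) • normalize y := by
    rw [smul_sub, norm_smul_normalize, sub_smul, norm_smul_normalize]
    abel
  calc ‖x‖ * ‖normalize x - normalize y‖
      = ‖(x - y) + (‖y‖ - ‖x‖) • normalize y‖ := by
        rw [← hsplit, norm_smul, norm_norm]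
    _ ≤ ‖x - y‖ + |‖y‖ - ‖x‖| * ‖normalize y‖ := by
        grw [norm_add_le, norm_smul, Real.norm_eq_abs]
    _ ≤ ‖x - y‖ + ‖x - y‖ * 1 := by
        gcongr
        · rw [← norm_sub_rev]; exact abs_norm_sub_norm_le y x
        · exact norm_normalize_le y
    _ = 2 * ‖x - y‖ := by ring

lemma norm_normalize_sub_le_of_one_le_norm {x : V} (hx : 1 ≤ ‖x‖) (y : V) :
    ‖normalize x - normalize y‖ ≤ 2 * ‖x - y‖ :=
  (le_mul_of_one_le_left (norm_nonneg _) hx).trans (norm_mul_norm_normalize_sub_le x y)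

lemma abs_inner_normalize_le_norm_sub_of_inner_eq_zero {E : Type*} [NormedAddCommGroup E]
    [InnerProductSpace ℝ E] {m v : E} (hmv : ⟪m, v⟫ = 0) (n : E) :
    |⟪n, normalize v⟫| ≤ ‖n - m‖ := by
  have hm : ⟪m, normalize v⟫ = 0 := by
    rw [normalize, real_inner_smul_right, hmv, mul_zero]
  calc |⟪n, normalize v⟫| = |⟪n - m, normalize v⟫| := by rw [inner_sub_left, hm, sub_zero]
    _ ≤ ‖n - m‖ * ‖normalize v‖ := abs_real_inner_le_norm _ _
    _ ≤ ‖n - m‖ := mul_le_of_le_one_right (norm_nonneg _) (norm_normalize_le v)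

end NormedSpace

def normalDir (g : R2) : R3 := (WithLp.equiv 2 (Fin 3 → ℝ)).symm ![g 0, g 1, -1]

lemma norm_normalDir_sq (g : R2) : ‖normalDir g‖ ^ 2 = 1 + ‖g‖ ^ 2 := by
  simp [EuclideanSpace.norm_sq_eq, normalDir, Fin.sum_univ_succ, add_comm, add_left_comm]

lemma norm_normalDir_sub (a b : R2) : ‖normalDir a - normalDir b‖ = ‖a - b‖ := by
  rw [← sq_eq_sq₀ (norm_nonneg _) (norm_nonneg _)]
  simp [EuclideanSpace.norm_sq_eq, normalDir, Fin.sum_univ_succ]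

lemma one_le_norm_normalDir (g : R2) : 1 ≤ ‖normalDir g‖ := by
  nlinarith [norm_normalDir_sq g, norm_nonneg (normalDir g), sq_nonneg ‖g‖]

lemma normalOf_eq_normalize (g : R2) : normalOf g = NormedSpace.normalize (normalDir g) := by
  rw [NormedSpace.normalize, ← Real.sqrt_sq (norm_nonneg _), norm_normalDir_sq]
  rfl

lemma norm_normalOf_sub_le (a b : R2) : ‖normalOf a - normalOf b‖ ≤ 2 * ‖a - b‖ := by
  rw [normalOf_eq_normalize, normalOf_eq_normalize, ← norm_normalDir_sub]
  exact NormedSpace.norm_normalize_sub_le_of_one_le_norm (one_le_norm_normalDir a) _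

theorem stmt_17_general (g : R2 → R2)
    (c y : R2)
    (v : R3) (hperp : ⟪normalOf (g y), v⟫ = 0) :
    |⟪normalOf (g c), ‖v‖⁻¹ • v⟫| ≤ 2 * ‖g c - g y‖ :=
  (NormedSpace.abs_inner_normalize_le_norm_sub_of_inner_eq_zero hperp _).trans
    (norm_normalOf_sub_le _ _)

theorem stmt_17 (𝒜 : Set R2) (η : R2 → ℝ) (g : R2 → R2)
    (hg : ∀ x ∈ 𝒜, HasGradientAt η (g x) x)
    (c y : R2) (hc : c ∈ 𝒜) (hy : y ∈ 𝒜)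
    (v : R3) (hv : v ≠ 0) (hperp : ⟪normalOf (g y), v⟫ = 0) :
    |⟪normalOf (g c), ‖v‖⁻¹ • v⟫| ≤ 2 * ‖g c - g y‖ :=
  stmt_17_general g c y v hperp
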